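/- arXiv:1901.05628 — 3 statements merged into one kernel-verified Lean document; each statement's English description precedes it below -/
import Mathlib

section
/- Let $K \subset [0,1]^N$ be a closed subset and $0 \le n \le N$ an integer. For $A \subset \{1,\dots,N\}$ let $\pi_A : [0,1]^N \to [0,1]^A$ be the coordinate projection. Then $\nu_N\left(\bigcup_{|A|\ge n} \pi_A^{-1}(\pi_A K)\right) \le 4^N \mathcal{H}^n_\infty(K, \|\cdot\|)$, where the union is over all subsets $A$ of $\{1,\dots,N\}$ of cardinality at least $n$. -/
open MeasureTheory EMetric
open scoped ENNReal

noncomputable def hausdorffContentInf {X : Type*} [PseudoEMetricSpace X]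
    (s : ℕ) (K : Set X) : ℝ≥0∞ :=
  ⨅ (E : ℕ → Set X) (_ : K = ⋃ i, E i), ∑' i, (EMetric.diam (E i)) ^ s

def cylinderOver (N : ℕ) (K : Set (Fin N → ℝ)) (A : Finset (Fin N)) : Set (Fin N → ℝ) :=
  { x | x ∈ Set.univ.pi (fun _ => Set.Icc (0 : ℝ) 1) ∧ ∃ k ∈ K, ∀ i ∈ A, x i = k i }

/-! A cylinder over `S` in the directions `A` lies in a box whose sides are `[0,1]` and, for
`j ∈ A`, the `j`-th projection of `S`, of length at most `diam S`; so for `|A| ≥ n` its volume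
is at most `(diam S) ^ n`. The cylinders over the pieces of a cover `K = ⋃ Eᵢ` cover the
cylinder over `K`, and summing over the `2 ^ N` sets `A` gives the bound with constant `2 ^ N`. -/

lemma cylinderOver_subset_pi (N : ℕ) (S : Set (Fin N → ℝ)) (A : Finset (Fin N)) :
    cylinderOver N S A ⊆ Set.univ.pi fun j =>
      if j ∈ A then Set.Icc 0 1 ∩ Function.eval j '' S else Set.Icc 0 1 := by
  rintro x ⟨hx, k, hk, hxk⟩ j -
  dsimp only
  split_ifs with hj
  · exact ⟨hx j trivial, k, hk, (hxk j hj).symm⟩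
  · exact hx j trivial

lemma volume_cylinderOver_le_min_pow_card (N : ℕ) (S : Set (Fin N → ℝ)) (A : Finset (Fin N)) :
    volume (cylinderOver N S A) ≤ min 1 (Metric.ediam S) ^ A.card := by
  refine (measure_mono (cylinderOver_subset_pi N S A)).trans ?_
  rw [volume_pi_pi, ← Finset.univ_inter A, ← Finset.prod_const, ← Finset.prod_ite_mem,
    Finset.univ_inter]
  refine Finset.prod_le_prod' fun j _ => ?_
  split_ifs with hj
  · refine le_min ?_ ?_
    · exact (measure_mono Set.inter_subset_left).trans_eq (by simp)
    · calc volume (Set.Icc (0 : ℝ) 1 ∩ Function.eval j '' S)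
          ≤ Metric.ediam (Function.eval j '' S) :=
            (measure_mono Set.inter_subset_right).trans (Real.volume_le_diam _)
        _ ≤ Metric.ediam S := by simpa using (LipschitzWith.eval j).ediam_image_le S
  · simp

lemma volume_cylinderOver_le_diam_pow {N n : ℕ} (S : Set (Fin N → ℝ)) {A : Finset (Fin N)}
    (hA : n ≤ A.card) : volume (cylinderOver N S A) ≤ Metric.ediam S ^ n :=
  calc volume (cylinderOver N S A) ≤ min 1 (Metric.ediam S) ^ A.card :=
        volume_cylinderOver_le_min_pow_card N S A
    _ ≤ min 1 (Metric.ediam S) ^ n := pow_le_pow_right_of_le_one' (min_le_left _ _) hA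
    _ ≤ Metric.ediam S ^ n := pow_le_pow_left' (min_le_right _ _) n

lemma cylinderOver_iUnion (N : ℕ) (E : ℕ → Set (Fin N → ℝ)) (A : Finset (Fin N)) :
    cylinderOver N (⋃ i, E i) A = ⋃ i, cylinderOver N (E i) A := by
  ext x
  simp only [cylinderOver, Set.mem_iUnion, Set.mem_ofPred_eq]
  grind

lemma volume_cylinderOver_iUnion_le {N n : ℕ} (E : ℕ → Set (Fin N → ℝ)) {A : Finset (Fin N)}
    (hA : n ≤ A.card) :
    volume (cylinderOver N (⋃ i, E i) A) ≤ ∑' i, Metric.ediam (E i) ^ n := by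
  rw [cylinderOver_iUnion]
  exact (measure_iUnion_le _).trans
    (ENNReal.tsum_le_tsum fun i => volume_cylinderOver_le_diam_pow (E i) hA)

theorem volume_iUnion_cylinderOver_le (N n : ℕ) (K : Set (Fin N → ℝ)) :
    volume (⋃ (A : Finset (Fin N)) (_ : n ≤ A.card), cylinderOver N K A)
      ≤ 2 ^ N * hausdorffContentInf n K := by
  simp only [hausdorffContentInf, ENNReal.mul_iInf_of_ne (pow_ne_zero _ two_ne_zero)
    (ENNReal.pow_ne_top ENNReal.ofNat_ne_top)]
  refine le_iInf₂ fun E hK => ?_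
  subst hK
  calc volume (⋃ (A : Finset (Fin N)) (_ : n ≤ A.card), cylinderOver N (⋃ i, E i) A)
      ≤ ∑ A : Finset (Fin N), volume (⋃ (_ : n ≤ A.card), cylinderOver N (⋃ i, E i) A) :=
        measure_iUnion_fintype_le _ _
    _ ≤ ∑ _ : Finset (Fin N), ∑' i, Metric.ediam (E i) ^ n :=
        Finset.sum_le_sum fun A _ => by
          by_cases hA : n ≤ A.card
          · simpa [hA] using volume_cylinderOver_iUnion_le E hA
          · simp [hA]
    _ = 2 ^ N * ∑' i, Metric.ediam (E i) ^ n := by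
        simp [Fintype.card_finset]

theorem stmt2_general (N n : ℕ) (K : Set (Fin N → ℝ)) :
    volume (⋃ (A : Finset (Fin N)) (_ : n ≤ A.card), cylinderOver N K A)
      ≤ 4 ^ N * hausdorffContentInf n K :=
  (volume_iUnion_cylinderOver_le N n K).trans <|
    mul_le_mul_left (pow_le_pow_left' (by norm_num) N) _

/-- For a closed subset `K ⊆ [0,1]^N` and `0 ≤ n ≤ N`,
`ν_N (⋃_{|A| ≥ n} π_A⁻¹(π_A K)) ≤ 4^N · 𝓗^n_∞(K, ‖·‖∞)`. -/
theorem stmt2 (N n : ℕ) (hn : n ≤ N) (K : Set (Fin N → ℝ)) (hKc : IsClosed K)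
    (hK : K ⊆ Set.univ.pi fun _ => Set.Icc (0 : ℝ) 1) :
    volume (⋃ (A : Finset (Fin N)) (_ : n ≤ A.card), cylinderOver N K A)
      ≤ 4 ^ N * hausdorffContentInf n K :=
  stmt2_general N n K
end

section
/- Let $(\mathcal{X},\mathbf{d})$ be a compact metric space. Then there exists a metric $\mathbf{d}'$ on $\mathcal{X}$, compatible with the topology, such that $\mathbf{d}'(x,y) \le \mathbf{d}(x,y)$ for all $x,y$, and $(\mathcal{X},\mathbf{d}')$ has the tame growth of covering numbers: for every $\delta>0$, $\lim_{\varepsilon\to 0} \varepsilon^\delta \log \#(\mathcal{X},\mathbf{d}',\varepsilon) = 0$. -/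
open Filter Set Topology

/-- Diameter of a set with respect to an abstract distance function `d`. -/
noncomputable def sdiam {X : Type*} (d : X → X → ℝ) (E : Set X) : ℝ :=
  sSup (Set.image2 d E E)

/-- `#(X, d, ε)`: the minimum cardinality of an open cover of `X` by sets of
`d`-diameter `< ε` (openness with respect to the given topology). -/
noncomputable def covNum (X : Type*) [TopologicalSpace X] (d : X → X → ℝ) (ε : ℝ) : ℕ :=
  sInf { n : ℕ | ∃ U : Fin n → Set X,
    (∀ i, IsOpen (U i)) ∧ (⋃ i, U i) = Set.univ ∧ ∀ i, sdiam d (U i) < ε }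

/-!
`d'(x, y) = ∑ 2^{-n} |d(x, xₙ) - d(y, xₙ)|` is at most `d`, so `d'`-open sets are `d`-open.
It separates points because `(xₙ)` is dense, so `d'(x, ·)` has a positive minimum on the compact
complement of a `d`-open set containing `x`, which makes that set `d'`-open.

Up to an error `2^{-N} diam X`, `d'` only sees the first `N` coordinates `d(·, xₙ)`. Cutting each
of them into intervals of length `≈ ε` covers `X` by `(diam X / ε)^N` sets of small `d'`-diameter;
with `N ≈ log₂(1/ε)` this gives `log #(X, d', ε) = O(log² ε)`, which is `o(ε^{-δ})` for every
`δ > 0`.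
-/

lemma hasSum_inv_two_pow_succ_mul (b : ℝ) :
    HasSum (fun n : ℕ => (2:ℝ)⁻¹ ^ (n + 1) * b) b :=
  (hasSum_geometric_two' b).congr_fun fun n => by rw [inv_pow, pow_succ]; ring

lemma summable_inv_two_pow_succ_mul {f : ℕ → ℝ} {b : ℝ} (hf0 : ∀ n, 0 ≤ f n)
    (hfb : ∀ n, f n ≤ b) : Summable fun n : ℕ => (2:ℝ)⁻¹ ^ (n + 1) * f n :=
  (hasSum_inv_two_pow_succ_mul b).summable.of_nonneg_of_le (fun n => by have := hf0 n; positivity)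
    fun n => by gcongr; exact hfb n

lemma tsum_inv_two_pow_succ_mul_le {f : ℕ → ℝ} {a b : ℝ} (N : ℕ) (ha : 0 ≤ a)
    (hf0 : ∀ n, 0 ≤ f n) (hfa : ∀ n < N, f n ≤ a) (hfb : ∀ n, f n ≤ b) :
    ∑' n : ℕ, (2:ℝ)⁻¹ ^ (n + 1) * f n ≤ a + 2⁻¹ ^ N * b := by
  have hs := summable_inv_two_pow_succ_mul hf0 hfb
  rw [← hs.sum_add_tsum_nat_add N]
  gcongr
  · calc ∑ n ∈ Finset.range N, (2:ℝ)⁻¹ ^ (n + 1) * f n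
        ≤ ∑ n ∈ Finset.range N, (2:ℝ)⁻¹ ^ (n + 1) * a :=
          Finset.sum_le_sum fun n hn => by gcongr; exact hfa n (Finset.mem_range.1 hn)
      _ ≤ ∑' n : ℕ, (2:ℝ)⁻¹ ^ (n + 1) * a :=
          (hasSum_inv_two_pow_succ_mul a).summable.sum_le_tsum _ fun n _ => by positivity
      _ = a := (hasSum_inv_two_pow_succ_mul a).tsum_eq
  · calc ∑' n : ℕ, (2:ℝ)⁻¹ ^ (n + N + 1) * f (n + N)
        ≤ ∑' n : ℕ, (2:ℝ)⁻¹ ^ (n + 1) * (2⁻¹ ^ N * b) := by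
          refine ((summable_nat_add_iff N).2 hs).tsum_le_tsum (fun n => ?_)
            (hasSum_inv_two_pow_succ_mul _).summable
          calc (2:ℝ)⁻¹ ^ (n + N + 1) * f (n + N) = 2⁻¹ ^ (n + 1) * (2⁻¹ ^ N * f (n + N)) := by
                ring
            _ ≤ 2⁻¹ ^ (n + 1) * (2⁻¹ ^ N * b) := by gcongr; exact hfb _
      _ = 2⁻¹ ^ N * b := (hasSum_inv_two_pow_succ_mul _).tsum_eq

section DenseSeqDist

variable {X : Type*} [PseudoMetricSpace X]

-- The paper's `d'` for the dense sequence `x_{n+1} = u n`.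
noncomputable def denseSeqDist (u : ℕ → X) (x y : X) : ℝ :=
  ∑' n : ℕ, (2:ℝ)⁻¹ ^ (n + 1) * |dist x (u n) - dist y (u n)|

lemma summable_denseSeqDist (u : ℕ → X) (x y : X) :
    Summable fun n : ℕ => (2:ℝ)⁻¹ ^ (n + 1) * |dist x (u n) - dist y (u n)| :=
  summable_inv_two_pow_succ_mul (fun _ => abs_nonneg _) fun _ => abs_dist_sub_le _ _ _

lemma denseSeqDist_nonneg (u : ℕ → X) (x y : X) : 0 ≤ denseSeqDist u x y :=
  tsum_nonneg fun _ => by positivity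

lemma denseSeqDist_le_add {u : ℕ → X} {x y : X} {D a : ℝ} (hD : dist x y ≤ D) (ha : 0 ≤ a)
    {N : ℕ} (hxy : ∀ n < N, |dist x (u n) - dist y (u n)| ≤ a) :
    denseSeqDist u x y ≤ a + 2⁻¹ ^ N * D :=
  tsum_inv_two_pow_succ_mul_le N ha (fun _ => abs_nonneg _) hxy
    fun _ => (abs_dist_sub_le _ _ _).trans hD

lemma denseSeqDist_le_dist (u : ℕ → X) (x y : X) : denseSeqDist u x y ≤ dist x y := by
  simpa using
    denseSeqDist_le_add (u := u) le_rfl le_rfl (N := 0) fun n hn => absurd hn n.not_lt_zero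

lemma denseSeqDist_comm (u : ℕ → X) (x y : X) : denseSeqDist u x y = denseSeqDist u y x :=
  tsum_congr fun _ => by rw [abs_sub_comm]

lemma denseSeqDist_self (u : ℕ → X) (x : X) : denseSeqDist u x x = 0 := by
  simp [denseSeqDist]

lemma denseSeqDist_triangle (u : ℕ → X) (x y z : X) :
    denseSeqDist u x z ≤ denseSeqDist u x y + denseSeqDist u y z := by
  rw [denseSeqDist, denseSeqDist, denseSeqDist,
    ← (summable_denseSeqDist u x y).tsum_add (summable_denseSeqDist u y z)]
  refine (summable_denseSeqDist u x z).tsum_le_tsum (fun n => ?_)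
    ((summable_denseSeqDist u x y).add (summable_denseSeqDist u y z))
  rw [← mul_add]
  gcongr
  exact abs_sub_le _ _ _

lemma lipschitzWith_denseSeqDist (u : ℕ → X) (x : X) : LipschitzWith 1 (denseSeqDist u x) :=
  LipschitzWith.of_le_add fun y z => by
    rw [dist_comm]
    linarith [denseSeqDist_triangle u x z y, denseSeqDist_le_dist u z y]

end DenseSeqDist

section Compatibility

variable {X : Type*} [MetricSpace X] {u : ℕ → X}

lemma denseSeqDist_pos (hu : DenseRange u) {x y : X} (hxy : x ≠ y) : 0 < denseSeqDist u x y := by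
  obtain ⟨n, hn⟩ := hu.exists_dist_lt x (half_pos (dist_pos.2 hxy))
  have hterm : 0 < |dist x (u n) - dist y (u n)| := by
    rw [abs_sub_comm]
    exact lt_abs.2 (Or.inl (by linarith [dist_triangle_right x y (u n)]))
  exact lt_of_lt_of_le (by positivity)
    ((summable_denseSeqDist u x y).le_tsum n fun _ _ => by positivity)

lemma denseSeqDist_eq_zero (hu : DenseRange u) {x y : X} : denseSeqDist u x y = 0 ↔ x = y :=
  ⟨fun h => by_contra fun hxy => (denseSeqDist_pos hu hxy).ne' h,
    fun h => h ▸ denseSeqDist_self u x⟩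

lemma isOpen_iff_denseSeqDist [CompactSpace X] (hu : DenseRange u) (s : Set X) :
    IsOpen s ↔ ∀ x ∈ s, ∃ ε > 0, {y | denseSeqDist u x y < ε} ⊆ s := by
  refine ⟨fun hs x hx => ?_, fun h => Metric.isOpen_iff.2 fun x hx => ?_⟩
  · obtain ⟨ε, hε, hle⟩ := hs.isClosed_compl.isCompact.exists_forall_le'
      (lipschitzWith_denseSeqDist u x).continuous.continuousOn
      fun y hy => denseSeqDist_pos hu fun hxy => hy (hxy ▸ hx)
    exact ⟨ε, hε, fun y hy => by_contra fun hys => (hle y hys).not_gt hy⟩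
  · obtain ⟨ε, hε, hsub⟩ := h x hx
    exact ⟨ε, hε, fun y hy => hsub ((denseSeqDist_le_dist u x y).trans_lt (by rwa [dist_comm]))⟩

end Compatibility

section Covering

lemma covNum_of_isEmpty {X : Type*} [TopologicalSpace X] [IsEmpty X] (d : X → X → ℝ) (ε : ℝ) :
    covNum X d ε = 0 :=
  Nat.sInf_eq_zero.2 <| Or.inl
    ⟨Fin.elim0, fun i => i.elim0, eq_univ_of_forall isEmptyElim, fun i => i.elim0⟩

lemma covNum_le_card {X ι : Type*} [TopologicalSpace X] [Fintype ι] {d : X → X → ℝ} {ε : ℝ}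
    (U : ι → Set X) (hU : ∀ i, IsOpen (U i)) (hcover : ⋃ i, U i = univ)
    (hdiam : ∀ i, sdiam d (U i) < ε) : covNum X d ε ≤ Fintype.card ι := by
  let e := (Fintype.equivFin ι).symm
  refine Nat.sInf_le ⟨U ∘ e, fun i => hU _, ?_, fun i => hdiam _⟩
  rw [← hcover]
  exact e.surjective.iUnion_comp U

lemma sdiam_lt_of_forall_le {X : Type*} {d : X → X → ℝ} {E : Set X} {c ε : ℝ} (hc : 0 ≤ c)
    (hcε : c < ε) (h : ∀ x ∈ E, ∀ y ∈ E, d x y ≤ c) : sdiam d E < ε :=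
  (Real.sSup_le (by rintro _ ⟨x, hx, y, hy, rfl⟩; exact h x hx y hy) hc).trans_lt hcε

variable {X : Type*} [PseudoMetricSpace X] {u : ℕ → X} {q D : ℝ} {N k : ℕ}

def gridCell (u : ℕ → X) (q : ℝ) (j : Fin N → Fin (k + 1)) : Set X :=
  ⋂ n : Fin N, (dist · (u n)) ⁻¹' Ioo (((j n : ℕ) : ℝ) * q - q) (((j n : ℕ) : ℝ) * q + q)

lemma isOpen_gridCell (j : Fin N → Fin (k + 1)) : IsOpen (gridCell u q j) :=
  isOpen_iInter_of_finite fun _ => isOpen_Ioo.preimage (continuous_id.dist continuous_const)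

lemma exists_mem_gridCell (hD : ∀ x y : X, dist x y ≤ D) (hq : 0 < q) (hk : D ≤ k * q) (x : X) :
    ∃ j : Fin N → Fin (k + 1), x ∈ gridCell u q j := by
  have hfloor (n : ℕ) : ⌊dist x (u n) / q⌋₊ < k + 1 :=
    Nat.lt_succ_of_le <| Nat.floor_le_of_le <| (div_le_iff₀ hq).2 ((hD _ _).trans hk)
  refine ⟨fun n => ⟨_, hfloor n⟩, mem_iInter.2 fun n => ⟨?_, ?_⟩⟩
  · have := Nat.floor_le (div_nonneg dist_nonneg hq.le : 0 ≤ dist x (u n) / q)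
    rw [le_div_iff₀ hq] at this
    linarith
  · have := Nat.lt_floor_add_one (dist x (u n) / q)
    rw [div_lt_iff₀ hq] at this
    linarith

lemma abs_dist_sub_lt_of_mem_gridCell {j : Fin N → Fin (k + 1)} {x y : X}
    (hx : x ∈ gridCell u q j) (hy : y ∈ gridCell u q j) (n : Fin N) :
    |dist x (u n) - dist y (u n)| < 2 * q := by
  obtain ⟨hx₁, hx₂⟩ := mem_iInter.1 hx n
  obtain ⟨hy₁, hy₂⟩ := mem_iInter.1 hy n
  rw [abs_sub_lt_iff]
  constructor <;> linarith

lemma covNum_denseSeqDist_le_pow (hD : ∀ x y : X, dist x y ≤ D) (hD0 : 0 ≤ D) (hq : 0 < q)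
    (hk : D ≤ k * q) {ε : ℝ} (hε : 2 * q + 2⁻¹ ^ N * D < ε) :
    covNum X (denseSeqDist u) ε ≤ (k + 1) ^ N := by
  simpa using covNum_le_card (gridCell (N := N) (k := k) u q) isOpen_gridCell
    (eq_univ_of_forall fun x => mem_iUnion.2 (exists_mem_gridCell hD hq hk x))
    fun j => sdiam_lt_of_forall_le (by positivity) hε fun x hx y hy =>
      denseSeqDist_le_add (hD x y) (by positivity) fun n hn =>
        (abs_dist_sub_lt_of_mem_gridCell hx hy ⟨n, hn⟩).le

lemma covNum_denseSeqDist_le_two_pow (hD : ∀ x y : X, dist x y ≤ D) (hD0 : 0 < D) (m : ℕ)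
    {ε : ℝ} (hε : 4 * D / 2 ^ m ≤ ε) : covNum X (denseSeqDist u) ε ≤ 2 ^ ((m + 1) ^ 2) := by
  have hq : 0 < D / 2 ^ m := by positivity
  have hgrid : 2 * (D / 2 ^ m) + 2⁻¹ ^ (m + 1) * D < ε := by
    calc 2 * (D / 2 ^ m) + 2⁻¹ ^ (m + 1) * D = 5 / 2 * (D / 2 ^ m) := by
          rw [inv_pow, pow_succ]; ring
      _ < 4 * D / 2 ^ m := by rw [mul_div_assoc]; gcongr; norm_num
      _ ≤ ε := hε
  calc covNum X (denseSeqDist u) ε ≤ (2 ^ m + 1) ^ (m + 1) :=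
        covNum_denseSeqDist_le_pow hD hD0.le hq
          (by push_cast; rw [mul_div_cancel₀ _ (by positivity)]) hgrid
    _ ≤ (2 ^ (m + 1)) ^ (m + 1) := Nat.pow_le_pow_left (Nat.pow_lt_pow_succ one_lt_two) _
    _ = 2 ^ ((m + 1) ^ 2) := by rw [← pow_mul, sq]

end Covering

section Growth

lemma logb_two_le_of_le_two_pow {n k : ℕ} (h : n ≤ 2 ^ k) : Real.logb 2 n ≤ k := by
  rcases n.eq_zero_or_pos with rfl | hn
  · simp
  calc Real.logb 2 n ≤ Real.logb 2 ((2 : ℝ) ^ k) :=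
        Real.logb_le_logb_of_le one_lt_two (by exact_mod_cast hn) (by exact_mod_cast h)
    _ = k := by simp [Real.logb_pow]

lemma logb_covNum_denseSeqDist_le {X : Type*} [PseudoMetricSpace X] {u : ℕ → X} {D ε : ℝ}
    (hD : ∀ x y : X, dist x y ≤ D) (hD0 : 0 < D) (hε0 : 0 < ε) (hε : ε ≤ 4 * D) :
    Real.logb 2 (covNum X (denseSeqDist u) ε) ≤ (Real.logb 2 (4 * D / ε) + 2) ^ 2 := by
  set t := Real.logb 2 (4 * D / ε)
  have ht : 0 ≤ t := Real.logb_nonneg one_lt_two ((one_le_div hε0).2 hε)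
  have hscale : 4 * D / 2 ^ ⌈t⌉₊ ≤ ε := by
    have := (Real.logb_le_iff_le_rpow one_lt_two (by positivity)).1 (Nat.le_ceil t)
    rw [Real.rpow_natCast, div_le_iff₀ hε0] at this
    rw [div_le_iff₀ (by positivity)]
    linarith
  calc Real.logb 2 (covNum X (denseSeqDist u) ε) ≤ ((⌈t⌉₊ + 1) ^ 2 : ℕ) :=
        logb_two_le_of_le_two_pow (covNum_denseSeqDist_le_two_pow hD hD0 _ hscale)
    _ ≤ (t + 2) ^ 2 := by
        push_cast
        exact pow_le_pow_left₀ (by positivity) (by linarith [Nat.ceil_lt_add_one ht]) 2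

lemma tendsto_rpow_mul_add_mul_log_sq {δ : ℝ} (hδ : 0 < δ) (a b : ℝ) :
    Tendsto (fun ε => ε ^ δ * (a + b * Real.log ε) ^ 2) (𝓝[>] 0) (𝓝 0) := by
  have hpow : Tendsto (fun ε : ℝ => ε ^ (δ / 2)) (𝓝[>] 0) (𝓝 0) := by
    have := Real.continuousAt_rpow_const 0 (δ / 2) (Or.inr (by positivity))
    simpa [Real.zero_rpow (by positivity : δ / 2 ≠ 0)] using
      this.tendsto.mono_left nhdsWithin_le_nhds
  have hlog := tendsto_log_mul_rpow_nhdsGT_zero (half_pos hδ)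
  have hsq := ((hpow.const_mul a).add (hlog.const_mul b)).pow 2
  simp only [mul_zero, add_zero, ne_eq, OfNat.ofNat_ne_zero, not_false_eq_true, zero_pow] at hsq
  refine hsq.congr' ?_
  filter_upwards [self_mem_nhdsWithin] with ε (hε : 0 < ε)
  have hsplit : ε ^ δ = (ε ^ (δ / 2)) ^ 2 := by
    rw [← Real.rpow_natCast, ← Real.rpow_mul hε.le]
    norm_num
  rw [hsplit]
  ring

lemma tendsto_rpow_mul_logb_covNum_denseSeqDist {X : Type*} [PseudoMetricSpace X] [BoundedSpace X]
    (u : ℕ → X) {δ : ℝ} (hδ : 0 < δ) :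
    Tendsto (fun ε : ℝ => ε ^ δ * Real.logb 2 (covNum X (denseSeqDist u) ε)) (𝓝[>] 0) (𝓝 0) := by
  set D := Metric.diam (univ : Set X) + 1
  have hD0 : 0 < D := by positivity
  have hD (x y : X) : dist x y ≤ D :=
    (Metric.dist_le_diam_of_mem (Bornology.isBounded_univ.2 ‹_›) trivial trivial).trans
      (le_add_of_nonneg_right zero_le_one)
  refine squeeze_zero' ?_ ?_
    (tendsto_rpow_mul_add_mul_log_sq hδ (Real.logb 2 (4 * D) + 2) (-(Real.log 2)⁻¹))
  · filter_upwards [self_mem_nhdsWithin] with ε (hε : 0 < ε)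
    exact mul_nonneg (Real.rpow_nonneg hε.le δ)
      (div_nonneg (Real.log_natCast_nonneg _) (Real.log_nonneg one_le_two))
  · filter_upwards [Ioo_mem_nhdsGT (by positivity : (0 : ℝ) < 4 * D)] with ε ⟨hε0, hε⟩
    calc ε ^ δ * Real.logb 2 (covNum X (denseSeqDist u) ε)
        ≤ ε ^ δ * (Real.logb 2 (4 * D / ε) + 2) ^ 2 := by
          gcongr; exact logb_covNum_denseSeqDist_le hD hD0 hε0 hε.le
      _ = _ := by
          rw [Real.logb_div (by positivity) hε0.ne']
          simp only [Real.logb, div_eq_mul_inv]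
          ring

end Growth

/-- Every compact metric space admits a smaller compatible metric with
the tame growth of covering numbers: there is `d'` with `d' ≤ d`, `d'` a metric inducing
the given topology, and for every `δ > 0`, `ε^δ · log₂ #(X, d', ε) → 0` as `ε → 0⁺`. -/
theorem stmt3 (X : Type*) [MetricSpace X] [CompactSpace X] :
    ∃ d' : X → X → ℝ,
      (∀ x y, 0 ≤ d' x y) ∧
      (∀ x y, d' x y = 0 ↔ x = y) ∧
      (∀ x y, d' x y = d' y x) ∧
      (∀ x y z, d' x z ≤ d' x y + d' y z) ∧
      (∀ s : Set X, IsOpen s ↔ ∀ x ∈ s, ∃ ε > 0, { y | d' x y < ε } ⊆ s) ∧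
      (∀ x y, d' x y ≤ dist x y) ∧
      (∀ δ > (0:ℝ), Tendsto (fun ε : ℝ => ε ^ δ * Real.logb 2 (covNum X d' ε))
        (𝓝[>] 0) (𝓝 0)) := by
  rcases isEmpty_or_nonempty X with hX | hX
  · refine ⟨dist, fun _ _ => dist_nonneg, fun _ _ => dist_eq_zero, dist_comm, dist_triangle,
      fun s => iff_of_true (Subsingleton.elim ∅ s ▸ isOpen_empty) fun x => isEmptyElim x,
      fun _ _ => le_rfl, fun δ _ => ?_⟩
    simp [covNum_of_isEmpty]
  · obtain ⟨u, hu⟩ := TopologicalSpace.exists_dense_seq X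
    exact ⟨denseSeqDist u, denseSeqDist_nonneg u, fun _ _ => denseSeqDist_eq_zero hu,
      denseSeqDist_comm u, denseSeqDist_triangle u, isOpen_iff_denseSeqDist hu,
      denseSeqDist_le_dist u, fun _ => tendsto_rpow_mul_logb_covNum_denseSeqDist u⟩
end

section
/- Let $(\mathcal{X},\mathbf{d})$ be a compact metric space, $P$ a (finite) simplicial complex, $\varphi:\mathcal{X}\to\mathbb{R}$ continuous, and $\varepsilon>0$. Then $\operatorname{widim}'_\varepsilon(\mathcal{X},\mathbf{d},\varphi) \le \operatorname{widim}_\varepsilon(\mathcal{X},\mathbf{d},\varphi) \le \operatorname{widim}'_\varepsilon(\mathcal{X},\mathbf{d},\varphi) + \operatorname{var}_\varepsilon(\varphi,\mathbf{d})$, where $\operatorname{var}_\varepsilon(\varphi,\mathbf{d}) = \sup\{|\varphi(x)-\varphi(y)| : \mathbf{d}(x,y)<\varepsilon\}$. -/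
open Filter Set Topology

/-- The covering quantity with potential:
`#(X, d, ψ, ε) = inf { ∑ᵢ (1/ε)^(sup_{Uᵢ} ψ) }` over finite open covers
`X = U₁ ∪ ⋯ ∪ Uₙ` with `diam(Uᵢ, d) < ε` for all `i`. -/
noncomputable def covPot (X : Type*) [TopologicalSpace X] (d : X → X → ℝ)
    (ψ : X → ℝ) (ε : ℝ) : ℝ :=
  sInf { r : ℝ | ∃ (n : ℕ) (U : Fin n → Set X),
    (∀ i, IsOpen (U i)) ∧ (⋃ i, U i) = Set.univ ∧ (∀ i, sdiam d (U i) < ε) ∧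
    r = ∑ i, (1 / ε) ^ (sSup (ψ '' U i)) }

/-- The dynamical metric `d_N(x,y) = max_{0 ≤ n < N} d(Tⁿ x, Tⁿ y)`. -/
noncomputable def dynMet {X : Type*} [PseudoMetricSpace X] (T : X → X) (N : ℕ)
    (x y : X) : ℝ :=
  (((Finset.range N).sup fun n => nndist (T^[n] x) (T^[n] y)) : NNReal)

/-- The Birkhoff sum `S_N φ (x) = ∑_{n=0}^{N-1} φ(Tⁿ x)`. -/
noncomputable def birk {X : Type*} (T : X → X) (φ : X → ℝ) (N : ℕ) (x : X) : ℝ :=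
  ∑ n ∈ Finset.range N, φ (T^[n] x)

/-- `P(X, T, d, φ, ε) = lim_N (1/N) log₂ #(X, d_N, S_N φ, ε)` (the limit exists by
subadditivity; we use `limsup` to have a total definition). -/
noncomputable def PPot (X : Type*) [PseudoMetricSpace X]
    (T : X → X) (φ : X → ℝ) (ε : ℝ) : ℝ :=
  limsup (fun N : ℕ =>
    Real.logb 2 (covPot X (dynMet T N) (birk T φ N) ε) / N) atTop

/-- Upper metric mean dimension with potential. -/
noncomputable def mdimMSup (X : Type*) [MetricSpace X] (T : X → X) (φ : X → ℝ) : ℝ :=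
  limsup (fun ε : ℝ => PPot X T φ ε / Real.logb 2 (1 / ε)) (𝓝[>] 0)

/-- Lower metric mean dimension with potential. -/
noncomputable def mdimMInf (X : Type*) [MetricSpace X] (T : X → X) (φ : X → ℝ) : ℝ :=
  liminf (fun ε : ℝ => PPot X T φ ε / Real.logb 2 (1 / ε)) (𝓝[>] 0)

/-- A finite (abstract) simplicial complex: a nonempty-face, downward-closed family of
nonempty subsets of the vertex set `Fin k`. -/
structure FinSC where
  k : ℕ
  faces : Finset (Finset (Fin k))
  nonempty_mem : ∀ s ∈ faces, s.Nonempty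
  down_closed : ∀ s ∈ faces, ∀ t ⊆ s, t.Nonempty → t ∈ faces

open Classical in
/-- The support of a barycentric-coordinate vector. -/
noncomputable def fsupp {k : ℕ} (w : Fin k → ℝ) : Finset (Fin k) :=
  Finset.univ.filter fun i => w i ≠ 0

/-- The geometric realization of `P`, as the set of barycentric coordinate vectors
whose support is a face of `P`. -/
noncomputable def FinSC.space (P : FinSC) : Set (Fin P.k → ℝ) :=
  { w | (∀ i, 0 ≤ w i) ∧ (∑ i, w i) = 1 ∧ fsupp w ∈ P.faces }

/-- The local dimension `dim_a P`: the maximal dimension of a simplex of `P`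
containing the point `a` (given by barycentric coordinates `w`). -/
noncomputable def FinSC.locdim (P : FinSC) (w : Fin P.k → ℝ) : ℕ :=
  sSup { m : ℕ | ∃ s ∈ P.faces, fsupp w ⊆ s ∧ m = s.card - 1 }

/-- The small local dimension `dim'_a P`: the minimal dimension of a simplex of `P`
containing the point `a`. -/
noncomputable def FinSC.locdim' (P : FinSC) (w : Fin P.k → ℝ) : ℕ :=
  sInf { m : ℕ | ∃ s ∈ P.faces, fsupp w ⊆ s ∧ m = s.card - 1 }

/-- The dimension of `P`: the maximal dimension of a simplex of `P`. -/
noncomputable def FinSC.dim (P : FinSC) : ℕ :=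
  sSup { m : ℕ | ∃ s ∈ P.faces, m = s.card - 1 }

/-- The open star `O_P(v)` of a vertex `v`: the union of the open simplexes of `P`
having `v` as a vertex, i.e. the points of `|P|` whose `v`-coordinate is nonzero. -/
noncomputable def FinSC.star (P : FinSC) (v : Fin P.k) : Set (Fin P.k → ℝ) :=
  { w ∈ P.space | w v ≠ 0 }

/-- `F` is (the face set of) a subcomplex of `P`. -/
def FinSC.IsSubcomplex (P : FinSC) (F : Finset (Finset (Fin P.k))) : Prop :=
  F ⊆ P.faces ∧ ∀ s ∈ F, ∀ t ⊆ s, t.Nonempty → t ∈ F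

/-- The geometric realization of the subcomplex of `P` with face set `F`. -/
noncomputable def FinSC.subSpace (P : FinSC) (F : Finset (Finset (Fin P.k))) :
    Set (Fin P.k → ℝ) :=
  { w | (∀ i, 0 ≤ w i) ∧ (∑ i, w i) = 1 ∧ fsupp w ∈ F }

/-- A continuous map `f : X → |P|` is essential if no proper subcomplex of `P`
contains the image of `f`. -/
def FinSC.Essential {X : Type*} (P : FinSC) (f : X → (Fin P.k → ℝ)) : Prop :=
  ∀ F : Finset (Finset (Fin P.k)), P.IsSubcomplex F → (∀ x, f x ∈ P.subSpace F) →
    F = P.faces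

/-- `widim_ε(X, d, φ)`: the infimum of `max_x (dim_{f(x)} P + φ(x))` over all finite
simplicial complexes `P` and `ε`-embeddings `f : X → |P|` (continuous maps all of
whose fibers have `d`-diameter `< ε`). -/
noncomputable def widimPot (X : Type*) [TopologicalSpace X] (d : X → X → ℝ)
    (φ : X → ℝ) (ε : ℝ) : ℝ :=
  sInf { r : ℝ | ∃ (P : FinSC) (f : X → (Fin P.k → ℝ)), Continuous f ∧
    (∀ x, f x ∈ P.space) ∧ (∀ p : Fin P.k → ℝ, sdiam d (f ⁻¹' {p}) < ε) ∧
    r = sSup (Set.range fun x => (P.locdim (f x) : ℝ) + φ x) }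

/-- `widim'_ε(X, d, φ)`: as `widim_ε` but with the small local dimension `dim'`. -/
noncomputable def widimPot' (X : Type*) [TopologicalSpace X] (d : X → X → ℝ)
    (φ : X → ℝ) (ε : ℝ) : ℝ :=
  sInf { r : ℝ | ∃ (P : FinSC) (f : X → (Fin P.k → ℝ)), Continuous f ∧
    (∀ x, f x ∈ P.space) ∧ (∀ p : Fin P.k → ℝ, sdiam d (f ⁻¹' {p}) < ε) ∧
    r = sSup (Set.range fun x => (P.locdim' (f x) : ℝ) + φ x) }

/-- `var_ε(φ, d) = sup { |φ(x) - φ(y)| : d(x,y) < ε }`. -/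
noncomputable def varPot {X : Type*} (d : X → X → ℝ) (φ : X → ℝ) (ε : ℝ) : ℝ :=
  sSup { r : ℝ | ∃ x y, d x y < ε ∧ r = |φ x - φ y| }

/-!
`widim' ≤ widim` because `dim'_a P ≤ dim_a P` at every point. For the other inequality start
from an `ε`-embedding `f : X → |P|`. By compactness there is `δ > 0` such that points with
`δ`-close images are `ε`-close. Each barycentric subdivision shrinks the simplices by the factor
`1 - 1/(k+1)`, so some iterated subdivision `C` of `P` has all simplices of diameter `< δ`, and the
subdivision homeomorphism `h : |P| → |C|` does not enlarge supports. Restrict `C` to the simplices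
meeting the image of `g = h ∘ f`. A maximal simplex containing `g x` then lies in the support
simplex of some `g y`, so `d(x, y) < ε` and `dim_{g x} ≤ dim'_{f y} P`; hence
`dim_{g x} + φ x ≤ dim'_{f y} P + φ y + var_ε(φ)`.
-/

open MeasureTheory

section LevelSets

variable {ι : Type*}

lemma continuous_fold_max (s : Finset ι) (b : ℝ) : Continuous fun z : ι → ℝ => s.fold max b z := by
  induction s using Finset.cons_induction with
  | empty => exact continuous_const
  | cons i s _ ih => simpa only [Finset.fold_cons] using (continuous_apply i).max ih

lemma continuous_fold_min (s : Finset ι) (b : ℝ) : Continuous fun z : ι → ℝ => s.fold min b z := by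
  induction s using Finset.cons_induction with
  | empty => exact continuous_const
  | cons i s _ ih => simpa only [Finset.fold_cons] using (continuous_apply i).min ih

variable [Fintype ι]

open Classical in
noncomputable def superlevel (z : ι → ℝ) (t : ℝ) : Finset ι := Finset.univ.filter fun i => t < z i

@[simp] lemma mem_superlevel {z : ι → ℝ} {t : ℝ} {i : ι} : i ∈ superlevel z t ↔ t < z i := by
  simp [superlevel]

lemma superlevel_anti {z : ι → ℝ} {t t' : ℝ} (h : t ≤ t') : superlevel z t' ⊆ superlevel z t :=
  fun _ hi => h.trans_lt (mem_superlevel.1 hi) |> mem_superlevel.2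

variable [DecidableEq ι]

/-- The heights `t ∈ [0, 1)` at which the superlevel set `{z > t}` is exactly `s`. -/
noncomputable def levelInterval (s : Finset ι) (z : ι → ℝ) : Set ℝ :=
  Set.Ico (sᶜ.fold max 0 z) (s.fold min 1 z)

lemma mem_levelInterval {s : Finset ι} {z : ι → ℝ} {t : ℝ} :
    t ∈ levelInterval s z ↔ 0 ≤ t ∧ t < 1 ∧ superlevel z t = s := by
  simp only [levelInterval, Set.mem_Ico, Finset.fold_max_le, Finset.lt_fold_min,
    Finset.mem_compl, Finset.ext_iff, mem_superlevel]
  constructor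
  · rintro ⟨⟨h0, hout⟩, h1, hin⟩
    exact ⟨h0, h1, fun i => ⟨fun h => by_contra fun hi => (hout i hi).not_gt h, hin i⟩⟩
  · rintro ⟨h0, h1, h⟩
    exact ⟨⟨h0, fun i hi => not_lt.1 fun h' => hi ((h i).1 h')⟩, h1, fun i hi => (h i).2 hi⟩

noncomputable def levelLength (s : Finset ι) (z : ι → ℝ) : ℝ :=
  max (s.fold min 1 z - sᶜ.fold max 0 z) 0

lemma volume_real_levelInterval (s : Finset ι) (z : ι → ℝ) :
    volume.real (levelInterval s z) = levelLength s z :=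
  Real.volume_real_Ico

lemma levelLength_nonneg (s : Finset ι) (z : ι → ℝ) : 0 ≤ levelLength s z := le_max_right _ _

lemma continuous_levelLength (s : Finset ι) : Continuous (levelLength s) :=
  ((continuous_fold_min s 1).sub (continuous_fold_max sᶜ 0)).max continuous_const

lemma exists_superlevel_eq_of_levelLength_ne_zero {s : Finset ι} {z : ι → ℝ}
    (h : levelLength s z ≠ 0) : ∃ t, 0 ≤ t ∧ superlevel z t = s := by
  have hlt : sᶜ.fold max 0 z < s.fold min 1 z := by
    by_contra hle
    exact h (max_eq_right (by linarith))
  obtain ⟨h0, -, hs⟩ := mem_levelInterval.1 (Set.left_mem_Ico.2 hlt)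
  exact ⟨_, h0, hs⟩

/-- Layer-cake formula: `[0, z i)` is the disjoint union of the level intervals of the
sets containing `i`. -/
lemma sum_levelLength_eq {z : ι → ℝ} (h0 : ∀ j, 0 ≤ z j) (h1 : ∀ j, z j ≤ 1) (i : ι) :
    ∑ s ∈ Finset.univ.filter (fun s => i ∈ s), levelLength s z = z i := by
  set F := Finset.univ.filter fun s : Finset ι => i ∈ s
  have hcover : Set.Ico 0 (z i) = ⋃ s ∈ F, levelInterval s z := by
    ext t
    simp only [F, Set.mem_Ico, Set.mem_iUnion, mem_levelInterval, Finset.mem_filter,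
      Finset.mem_univ, true_and, exists_prop]
    constructor
    · rintro ⟨ht0, hti⟩
      exact ⟨superlevel z t, mem_superlevel.2 hti, ht0, hti.trans_le (h1 i), rfl⟩
    · rintro ⟨s, his, ht0, -, rfl⟩
      exact ⟨ht0, mem_superlevel.1 his⟩
  have hdisj : Set.PairwiseDisjoint (F : Set (Finset ι)) (levelInterval · z) := by
    intro s _ s' _ hss'
    refine Set.disjoint_left.2 fun t hs hs' => hss' ?_
    rw [← (mem_levelInterval.1 hs).2.2, (mem_levelInterval.1 hs').2.2]
  calc ∑ s ∈ F, levelLength s z = volume.real (⋃ s ∈ F, levelInterval s z) := by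
        rw [measureReal_biUnion_finset hdisj (fun _ _ => measurableSet_Ico)
          fun _ _ => measure_Ico_lt_top.ne]
        simp only [volume_real_levelInterval]
    _ = z i := by rw [← hcover, Real.volume_real_Ico_of_le (h0 i), sub_zero]

end LevelSets

lemma mem_fsupp {k : ℕ} {w : Fin k → ℝ} {i : Fin k} : i ∈ fsupp w ↔ w i ≠ 0 := by
  unfold fsupp
  rw [Finset.mem_filter]
  exact and_iff_right (Finset.mem_univ i)

lemma superlevel_subset_fsupp {k : ℕ} {z : Fin k → ℝ} {t : ℝ} (ht : 0 ≤ t) :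
    superlevel z t ⊆ fsupp z :=
  fun _ hi => mem_fsupp.2 (ht.trans_lt (mem_superlevel.1 hi)).ne'

lemma card_le_of_isChain {ι α : Type*} {S : Finset ι} {F : ι → Finset α} (hF : Set.InjOn F S)
    (hS : IsChain (fun a b => F a ⊆ F b) (S : Set ι)) (hne : ∀ a ∈ S, (F a).Nonempty)
    {n : ℕ} (hn : ∀ a ∈ S, (F a).card ≤ n) : S.card ≤ n := by
  have hinj : Set.InjOn (fun a => (F a).card) S := by
    intro a ha b hb hab
    by_contra h
    rcases hS ha hb h with hsub | hsub
    · exact h (hF ha hb (Finset.eq_of_subset_of_card_le hsub hab.ge))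
    · exact h (hF ha hb (Finset.eq_of_subset_of_card_le hsub hab.le).symm)
  simpa using Finset.card_le_card_of_injOn _
    (fun a ha => Finset.mem_Icc.2 ⟨(hne a ha).card_pos, hn a ha⟩) hinj

namespace FinSC

variable (P : FinSC)

noncomputable def face (a : Fin P.faces.card) : Finset (Fin P.k) := P.faces.equivFin.symm a

lemma face_mem (a : Fin P.faces.card) : P.face a ∈ P.faces := (P.faces.equivFin.symm a).2

lemma face_nonempty (a : Fin P.faces.card) : (P.face a).Nonempty :=
  P.nonempty_mem _ (P.face_mem a)

lemma face_injective : Function.Injective P.face :=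
  Subtype.val_injective.comp P.faces.equivFin.symm.injective

lemma sum_face {M : Type*} [AddCommMonoid M] (g : Finset (Fin P.k) → M) :
    ∑ a, g (P.face a) = ∑ s ∈ P.faces, g s := by
  rw [← Finset.sum_coe_sort P.faces g]
  exact Equiv.sum_comp P.faces.equivFin.symm fun s => g s

open Classical in
/-- The barycentric subdivision: its vertices are the faces of `P`, its simplices the chains. -/
noncomputable def sd : FinSC where
  k := P.faces.card
  faces := Finset.univ.filter fun S =>
    S.Nonempty ∧ IsChain (fun a b => P.face a ⊆ P.face b) (S : Set (Fin P.faces.card))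
  nonempty_mem _ hS := (Finset.mem_filter.1 hS).2.1
  down_closed _ hS _ hTS hT := Finset.mem_filter.2
    ⟨Finset.mem_univ _, hT, (Finset.mem_filter.1 hS).2.2.mono (Finset.coe_subset.2 hTS)⟩

lemma mem_sd_faces {S : Finset (Fin P.faces.card)} :
    S ∈ P.sd.faces ↔ S.Nonempty ∧ IsChain (fun a b => P.face a ⊆ P.face b) (S : Set _) := by
  classical
  exact Finset.mem_filter.trans (and_iff_right (Finset.mem_univ S))

/-- The coordinate of `z` at the vertex `s` of `P.sd` is `|s|` times the length of the set of
heights whose superlevel set of `z` is `s`; this inverts the affine map sending each vertex `s`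
to the barycenter of `s` (`sum_sdMap_smul_baryPos`). -/
noncomputable def sdMap (z : Fin P.k → ℝ) : Fin P.faces.card → ℝ :=
  fun a => (P.face a).card * levelLength (P.face a) z

noncomputable def baryPos {E : Type*} [AddCommGroup E] [Module ℝ E] (v : Fin P.k → E)
    (a : Fin P.faces.card) : E :=
  (P.face a).centerMass (fun _ => (1 : ℝ)) v

lemma continuous_sdMap : Continuous P.sdMap :=
  continuous_pi fun _ => continuous_const.mul (continuous_levelLength _)

variable {P} {z : Fin P.k → ℝ}

lemma le_one_of_mem_space (hz : z ∈ P.space) (i : Fin P.k) : z i ≤ 1 :=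
  hz.2.1 ▸ Finset.single_le_sum (fun j _ => hz.1 j) (Finset.mem_univ i)

lemma sum_faces_levelLength (hz : z ∈ P.space) (i : Fin P.k) :
    ∑ s ∈ P.faces.filter (fun s => i ∈ s), levelLength s z = z i := by
  rw [← sum_levelLength_eq hz.1 (le_one_of_mem_space hz) i]
  refine Finset.sum_subset (Finset.filter_subset_filter _ (Finset.subset_univ _))
    fun s hs hsP => ?_
  have his := (Finset.mem_filter.1 hs).2
  by_contra hne
  obtain ⟨t, ht, rfl⟩ := exists_superlevel_eq_of_levelLength_ne_zero hne
  exact hsP (Finset.mem_filter.2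
    ⟨P.down_closed _ hz.2.2 _ (superlevel_subset_fsupp ht) ⟨i, his⟩, his⟩)

theorem sum_sdMap_smul_baryPos {E : Type*} [AddCommGroup E] [Module ℝ E] (hz : z ∈ P.space)
    (v : Fin P.k → E) : ∑ a, P.sdMap z a • P.baryPos v a = ∑ i, z i • v i := by
  have hterm : ∀ a, P.sdMap z a • P.baryPos v a =
      ∑ i ∈ P.face a, levelLength (P.face a) z • v i := by
    intro a
    have hcard : ((P.face a).card : ℝ) ≠ 0 := by exact_mod_cast (P.face_nonempty a).card_pos.ne'
    simp [sdMap, baryPos, Finset.centerMass, smul_smul, mul_comm _ (levelLength _ z), hcard,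
      Finset.smul_sum]
  calc ∑ a, P.sdMap z a • P.baryPos v a = ∑ s ∈ P.faces, ∑ i ∈ s, levelLength s z • v i := by
        simp only [hterm]
        exact P.sum_face fun s => ∑ i ∈ s, levelLength s z • v i
    _ = ∑ i, ∑ s ∈ P.faces.filter (fun s => i ∈ s), levelLength s z • v i :=
        Finset.sum_comm' fun s i => by simp [and_comm]
    _ = ∑ i, z i • v i := by simp only [← Finset.sum_smul, sum_faces_levelLength hz]

lemma sum_sdMap (hz : z ∈ P.space) : ∑ a, P.sdMap z a = 1 := by
  have h := P.sum_sdMap_smul_baryPos hz fun _ => (1 : ℝ)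
  simp only [smul_eq_mul, mul_one, hz.2.1] at h
  rw [← h]
  refine Finset.sum_congr rfl fun a _ => ?_
  have hcard : ((P.face a).card : ℝ) ≠ 0 := by exact_mod_cast (P.face_nonempty a).card_pos.ne'
  simp [baryPos, Finset.centerMass, hcard]

lemma exists_superlevel_eq_face {a : Fin P.faces.card} (h : P.sdMap z a ≠ 0) :
    ∃ t, 0 ≤ t ∧ superlevel z t = P.face a :=
  exists_superlevel_eq_of_levelLength_ne_zero (right_ne_zero_of_mul h)

lemma isChain_fsupp_sdMap (z : Fin P.k → ℝ) :
    IsChain (fun a b => P.face a ⊆ P.face b) (fsupp (P.sdMap z) : Set _) := by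
  intro a ha b hb _
  obtain ⟨t, -, hta⟩ := exists_superlevel_eq_face (mem_fsupp.1 ha)
  obtain ⟨t', -, htb⟩ := exists_superlevel_eq_face (mem_fsupp.1 hb)
  show P.face a ⊆ P.face b ∨ P.face b ⊆ P.face a
  rw [← hta, ← htb]
  exact (le_total t t').symm.imp superlevel_anti superlevel_anti

lemma sdMap_mem (hz : z ∈ P.space) : P.sdMap z ∈ P.sd.space := by
  refine ⟨fun a => mul_nonneg (Nat.cast_nonneg _) (levelLength_nonneg _ _), sum_sdMap hz,
    (mem_sd_faces P).2 ⟨?_, isChain_fsupp_sdMap z⟩⟩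
  obtain ⟨a, -, ha⟩ := Finset.exists_ne_zero_of_sum_ne_zero (sum_sdMap hz ▸ one_ne_zero)
  exact ⟨a, mem_fsupp.2 ha⟩

lemma card_fsupp_sdMap_le (z : Fin P.k → ℝ) : (fsupp (P.sdMap z)).card ≤ (fsupp z).card :=
  card_le_of_isChain P.face_injective.injOn (isChain_fsupp_sdMap z)
    (fun a _ => P.face_nonempty a) fun a ha => by
      obtain ⟨t, ht, hta⟩ := exists_superlevel_eq_face (mem_fsupp.1 ha)
      exact Finset.card_le_card (hta ▸ superlevel_subset_fsupp ht)

lemma card_le_of_mem_sd_faces {n : ℕ} (hn : ∀ s ∈ P.faces, s.card ≤ n) :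
    ∀ S ∈ P.sd.faces, S.card ≤ n := fun _ hS =>
  card_le_of_isChain P.face_injective.injOn ((mem_sd_faces P).1 hS).2
    (fun a _ => P.face_nonempty a) fun a _ => hn _ (P.face_mem a)

end FinSC

section ConvexGeometry

variable {E : Type*} [NormedAddCommGroup E] [NormedSpace ℝ E] {ι : Type*}

lemma dist_le_centerMass {B : Finset ι} {v : ι → E} {D : ℝ}
    (hD : ∀ i ∈ B, ∀ j ∈ B, dist (v i) (v j) ≤ D) {i : ι} (hi : i ∈ B) :
    dist (v i) (B.centerMass (fun _ => (1 : ℝ)) v) ≤ (1 - (B.card : ℝ)⁻¹) * D := by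
  classical
  have hB : (B.card : ℝ) ≠ 0 := by exact_mod_cast (Finset.card_pos.2 ⟨i, hi⟩).ne'
  have hc : B.centerMass (fun _ => (1 : ℝ)) v - v i =
      (B.card : ℝ)⁻¹ • ∑ j ∈ B.erase i, (v j - v i) := by
    rw [Finset.sum_erase _ (sub_self _), Finset.sum_sub_distrib, Finset.sum_const, smul_sub,
      ← Nat.cast_smul_eq_nsmul ℝ, smul_smul, inv_mul_cancel₀ hB, one_smul]
    simp [Finset.centerMass]
  calc dist (v i) (B.centerMass (fun _ => (1 : ℝ)) v)
      = (B.card : ℝ)⁻¹ * ‖∑ j ∈ B.erase i, (v j - v i)‖ := by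
        rw [dist_comm, dist_eq_norm, hc, norm_smul, norm_inv, RCLike.norm_natCast]
    _ ≤ (B.card : ℝ)⁻¹ * ∑ _j ∈ B.erase i, D := by
        gcongr
        refine (norm_sum_le _ _).trans (Finset.sum_le_sum fun j hj => ?_)
        rw [← dist_eq_norm]
        exact hD j (Finset.mem_of_mem_erase hj) i hi
    _ = (1 - (B.card : ℝ)⁻¹) * D := by
        rw [Finset.sum_const, Finset.card_erase_of_mem hi, nsmul_eq_mul,
          Nat.cast_sub (Finset.card_pos.2 ⟨i, hi⟩), Nat.cast_one]
        field_simp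

lemma dist_centerMass_le_of_subset {A B : Finset ι} (hAB : A ⊆ B) (hA : A.Nonempty) {v : ι → E}
    {D : ℝ} (hD : ∀ i ∈ B, ∀ j ∈ B, dist (v i) (v j) ≤ D) :
    dist (A.centerMass (fun _ => (1 : ℝ)) v) (B.centerMass (fun _ => (1 : ℝ)) v) ≤
      (1 - (B.card : ℝ)⁻¹) * D := by
  have hmem : A.centerMass (fun _ => (1 : ℝ)) v ∈ convexHull ℝ (v '' B) :=
    A.centerMass_mem_convexHull (fun _ _ => zero_le_one) (by simpa using hA.card_pos)
      fun i hi => Set.mem_image_of_mem v (hAB hi)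
  obtain ⟨_, ⟨i, hi, rfl⟩, hle⟩ := convexHull_exists_dist_ge hmem (B.centerMass (fun _ => (1 : ℝ)) v)
  exact hle.trans (dist_le_centerMass hD hi)

lemma sum_smul_mem_convexHull [Fintype ι] {c : ι → ℝ} (h0 : ∀ i, 0 ≤ c i) (h1 : ∑ i, c i = 1)
    {S : Finset ι} (hS : ∀ i, c i ≠ 0 → i ∈ S) (v : ι → E) :
    ∑ i, c i • v i ∈ convexHull ℝ (v '' S) := by
  have hc0 : ∀ i ∉ S, c i = 0 := fun i hi => not_ne_iff.1 (mt (hS i) hi)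
  rw [← Finset.sum_subset (Finset.subset_univ S) fun i _ hi => by rw [hc0 i hi, zero_smul]]
  refine (convex_convexHull ℝ _).sum_mem (fun i _ => h0 i) ?_
    fun i hi => subset_convexHull ℝ _ (Set.mem_image_of_mem v hi)
  rwa [Finset.sum_subset (Finset.subset_univ S) fun i _ hi => hc0 i hi]

end ConvexGeometry

namespace FinSC

variable {E : Type*} [NormedAddCommGroup E] [NormedSpace ℝ E]

lemma dist_baryPos_le {P : FinSC} {n : ℕ} (hn : ∀ s ∈ P.faces, s.card ≤ n) {v : Fin P.k → E}
    {D : ℝ} (hD : ∀ s ∈ P.faces, ∀ i ∈ s, ∀ j ∈ s, dist (v i) (v j) ≤ D) :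
    ∀ S ∈ P.sd.faces, ∀ a ∈ S, ∀ b ∈ S,
      dist (P.baryPos v a) (P.baryPos v b) ≤ (1 - (n : ℝ)⁻¹) * D := by
  have key : ∀ a b, P.face a ⊆ P.face b →
      dist (P.baryPos v a) (P.baryPos v b) ≤ (1 - (n : ℝ)⁻¹) * D := by
    intro a b hab
    obtain ⟨i, hi⟩ := P.face_nonempty b
    have hD0 : 0 ≤ D := dist_self (v i) ▸ hD _ (P.face_mem b) i hi i hi
    have hb : (0 : ℝ) < (P.face b).card := by exact_mod_cast (P.face_nonempty b).card_pos
    refine (dist_centerMass_le_of_subset hab (P.face_nonempty a) (hD _ (P.face_mem b))).trans ?_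
    gcongr
    exact_mod_cast hn _ (P.face_mem b)
  intro S hS a ha b hb
  rcases eq_or_ne a b with rfl | hab
  · exact key a a subset_rfl
  · rcases ((mem_sd_faces P).1 hS).2 ha hb hab with h | h
    · exact key a b h
    · rw [dist_comm]
      exact key b a h

lemma dist_sum_smul_lt {C : FinSC} {v : Fin C.k → E} {δ : ℝ}
    (hmesh : ∀ s ∈ C.faces, ∀ i ∈ s, ∀ j ∈ s, dist (v i) (v j) < δ) {c c' : Fin C.k → ℝ}
    (hc : c ∈ C.space) (hc' : c' ∈ C.space) (hsub : fsupp c ⊆ fsupp c') :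
    dist (∑ j, c j • v j) (∑ j, c' j • v j) < δ := by
  obtain ⟨_, ⟨i, hi, rfl⟩, _, ⟨j, hj, rfl⟩, hle⟩ := convexHull_exists_dist_ge2
    (sum_smul_mem_convexHull hc.1 hc.2.1 (fun i hi => hsub (mem_fsupp.2 hi)) v)
    (sum_smul_mem_convexHull hc'.1 hc'.2.1 (fun i hi => mem_fsupp.2 hi) v)
  exact hle.trans_lt (hmesh _ hc'.2.2 i hi j hj)

/-- `v` places the vertices of `C` in the ambient space of `P`, and `h : |P| → |C|` is a section
of the induced affine map `|C| → |P|` that does not enlarge supports. -/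
def IsRefinement (P C : FinSC) (h : (Fin P.k → ℝ) → Fin C.k → ℝ) (v : Fin C.k → Fin P.k → ℝ) :
    Prop :=
  Continuous h ∧ ∀ z ∈ P.space,
    h z ∈ C.space ∧ ∑ j, h z j • v j = z ∧ (fsupp (h z)).card ≤ (fsupp z).card

lemma isRefinement_self (P : FinSC) : P.IsRefinement P id fun i => Pi.single i 1 :=
  ⟨continuous_id, fun z hz => ⟨hz, by ext l; simp [Finset.sum_apply, Pi.single_apply], le_rfl⟩⟩

lemma IsRefinement.sd {P C : FinSC} {h : (Fin P.k → ℝ) → Fin C.k → ℝ}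
    {v : Fin C.k → Fin P.k → ℝ} (H : P.IsRefinement C h v) :
    P.IsRefinement C.sd (C.sdMap ∘ h) (C.baryPos v) := by
  refine ⟨C.continuous_sdMap.comp H.1, fun z hz => ?_⟩
  obtain ⟨hmem, hsum, hcard⟩ := H.2 z hz
  exact ⟨sdMap_mem hmem, (sum_sdMap_smul_baryPos hmem v).trans hsum,
    (card_fsupp_sdMap_le _).trans hcard⟩

lemma dist_single_le_one {k : ℕ} (i j : Fin k) :
    dist (Pi.single i 1 : Fin k → ℝ) (Pi.single j 1) ≤ 1 :=
  (dist_pi_le_iff zero_le_one).2 fun l => by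
    simp only [Pi.single_apply, Real.dist_eq]
    split_ifs <;> norm_num

theorem exists_isRefinement_dist_lt (P : FinSC) {δ : ℝ} (hδ : 0 < δ) :
    ∃ (C : FinSC) (h : (Fin P.k → ℝ) → Fin C.k → ℝ) (v : Fin C.k → Fin P.k → ℝ),
      P.IsRefinement C h v ∧ ∀ s ∈ C.faces, ∀ i ∈ s, ∀ j ∈ s, dist (v i) (v j) < δ := by
  -- `P.k + 1` rather than `P.k` keeps the contraction factor below `1` also when `P.k = 0`.
  set θ : ℝ := 1 - ((P.k + 1 : ℕ) : ℝ)⁻¹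
  have hiter : ∀ N : ℕ, ∃ (C : FinSC) (h : (Fin P.k → ℝ) → Fin C.k → ℝ)
      (v : Fin C.k → Fin P.k → ℝ), P.IsRefinement C h v ∧ (∀ s ∈ C.faces, s.card ≤ P.k + 1) ∧
        ∀ s ∈ C.faces, ∀ i ∈ s, ∀ j ∈ s, dist (v i) (v j) ≤ θ ^ N := by
    intro N
    induction N with
    | zero =>
      refine ⟨P, id, _, P.isRefinement_self, fun s _ => ?_, fun _ _ i _ j _ => ?_⟩
      · exact (s.card_le_univ.trans_eq (Fintype.card_fin _)).trans (Nat.le_succ _)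
      · simpa using dist_single_le_one i j
    | succ N ih =>
      obtain ⟨C, h, v, hC, hn, hD⟩ := ih
      refine ⟨C.sd, _, _, hC.sd, C.card_le_of_mem_sd_faces hn, ?_⟩
      rw [pow_succ, mul_comm]
      exact C.dist_baryPos_le hn hD
  obtain ⟨N, hN⟩ := exists_pow_lt_of_lt_one hδ (show θ < 1 from sub_lt_self 1 (by positivity))
  obtain ⟨C, h, v, hC, -, hD⟩ := hiter N
  exact ⟨C, h, v, hC, fun s hs i hi j hj => (hD s hs i hi j hj).trans_lt hN⟩

end FinSC

section Diameter

variable {X : Type*} [PseudoMetricSpace X]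

lemma sdiam_nonneg (A : Set X) : 0 ≤ sdiam dist A :=
  Real.sSup_nonneg (by rintro _ ⟨x, -, y, -, rfl⟩; exact dist_nonneg)

variable [BoundedSpace X]

lemma bddAbove_image2_dist (A : Set X) : BddAbove (Set.image2 dist A A) := by
  obtain ⟨C, hC⟩ := Metric.isBounded_iff.1 (Bornology.IsBounded.all A)
  exact ⟨C, by rintro _ ⟨x, hx, y, hy, rfl⟩; exact hC hx hy⟩

lemma dist_le_sdiam {A : Set X} {x y : X} (hx : x ∈ A) (hy : y ∈ A) :
    dist x y ≤ sdiam dist A :=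
  le_csSup (bddAbove_image2_dist A) (Set.mem_image2_of_mem hx hy)

lemma sdiam_mono {A B : Set X} (h : A ⊆ B) : sdiam dist A ≤ sdiam dist B := by
  rcases A.eq_empty_or_nonempty with rfl | hA
  · simpa [sdiam, Real.sSup_empty] using sdiam_nonneg B
  · exact csSup_le_csSup (bddAbove_image2_dist B) (hA.image2 hA) (Set.image2_subset h h)

end Diameter

lemma Continuous.exists_pos_forall_dist_lt {X Y : Type*} [PseudoMetricSpace X] [CompactSpace X]
    [MetricSpace Y] {f : X → Y} (hf : Continuous f) {ε : ℝ}
    (hfib : ∀ x y, f x = f y → dist x y < ε) :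
    ∃ δ > 0, ∀ x y, dist (f x) (f y) < δ → dist x y < ε := by
  have hK : IsCompact {q : X × X | ε ≤ dist q.1 q.2} :=
    (isClosed_le continuous_const continuous_dist).isCompact
  obtain ⟨δ, hδ, hle⟩ := hK.exists_forall_le' (a := 0)
    ((hf.comp continuous_fst).dist (hf.comp continuous_snd)).continuousOn
    fun q hq => dist_pos.2 fun h => (hfib _ _ h).not_ge hq
  exact ⟨δ, hδ, fun x y hxy => not_le.1 fun h => (hle (x, y) h).not_gt hxy⟩

namespace FinSC

variable {P : FinSC}

lemma card_sub_one_le (s : Finset (Fin P.k)) : s.card - 1 ≤ P.k :=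
  (Nat.sub_le _ 1).trans (s.card_le_univ.trans_eq (Fintype.card_fin _))

variable (P) in
/-- `P.locdim w` and `P.locdim' w` are the supremum and the infimum of this set. -/
def faceDims (w : Fin P.k → ℝ) : Set ℕ := {m | ∃ s ∈ P.faces, fsupp w ⊆ s ∧ m = s.card - 1}

lemma le_of_mem_faceDims {w : Fin P.k → ℝ} {m : ℕ} (hm : m ∈ P.faceDims w) : m ≤ P.k := by
  obtain ⟨s, -, -, rfl⟩ := hm
  exact card_sub_one_le s

lemma locdim_le (P : FinSC) (w : Fin P.k → ℝ) : P.locdim w ≤ P.k :=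
  csSup_le' fun _ => le_of_mem_faceDims

lemma locdim'_le (P : FinSC) (w : Fin P.k → ℝ) : P.locdim' w ≤ P.k := by
  change sInf (P.faceDims w) ≤ P.k
  rcases (P.faceDims w).eq_empty_or_nonempty with h | ⟨m, hm⟩
  · simp [h]
  · exact (Nat.sInf_le hm).trans (le_of_mem_faceDims hm)

lemma locdim'_eq {w : Fin P.k → ℝ} (hw : fsupp w ∈ P.faces) :
    P.locdim' w = (fsupp w).card - 1 :=
  le_antisymm (Nat.sInf_le ⟨_, hw, subset_rfl, rfl⟩) <|
    le_csInf ⟨_, _, hw, subset_rfl, rfl⟩ <| by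
      rintro _ ⟨s, -, hs, rfl⟩
      exact Nat.sub_le_sub_right (Finset.card_le_card hs) 1

lemma locdim'_le_locdim {w : Fin P.k → ℝ} (hw : fsupp w ∈ P.faces) :
    P.locdim' w ≤ P.locdim w :=
  (locdim'_eq hw).trans_le
    (le_csSup ⟨P.k, fun _ => le_of_mem_faceDims⟩ ⟨_, hw, subset_rfl, rfl⟩)

lemma exists_locdim_eq {w : Fin P.k → ℝ} (h : ∃ s ∈ P.faces, fsupp w ⊆ s) :
    ∃ s ∈ P.faces, fsupp w ⊆ s ∧ P.locdim w = s.card - 1 := by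
  obtain ⟨s, hs, hws⟩ := h
  exact Nat.sSup_mem (s := P.faceDims w) ⟨_, s, hs, hws, rfl⟩ ⟨P.k, fun _ => le_of_mem_faceDims⟩

variable {X : Type*}

open Classical in
/-- The subcomplex of `C` on which `g` is essential. -/
noncomputable def restrictImage (C : FinSC) (g : X → Fin C.k → ℝ) : FinSC where
  k := C.k
  faces := C.faces.filter fun s => ∃ x, s ⊆ fsupp (g x)
  nonempty_mem s hs := C.nonempty_mem s (Finset.mem_filter.1 hs).1
  down_closed s hs t hts ht := by
    obtain ⟨hsC, x, hx⟩ := Finset.mem_filter.1 hs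
    exact Finset.mem_filter.2 ⟨C.down_closed s hsC t hts ht, x, hts.trans hx⟩

lemma mem_space_restrictImage {C : FinSC} {g : X → Fin C.k → ℝ} {x : X} (hx : g x ∈ C.space) :
    g x ∈ (C.restrictImage g).space := by
  classical
  exact ⟨hx.1, hx.2.1, Finset.mem_filter.2 ⟨hx.2.2, x, subset_rfl⟩⟩

lemma exists_locdim_restrictImage_le {C : FinSC} {g : X → Fin C.k → ℝ} {x : X}
    (hx : g x ∈ C.space) :
    ∃ y, fsupp (g x) ⊆ fsupp (g y) ∧
      (C.restrictImage g).locdim (g x) ≤ (fsupp (g y)).card - 1 := by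
  classical
  obtain ⟨s, hs, hxs, hdim⟩ := exists_locdim_eq (P := C.restrictImage g)
    ⟨_, (mem_space_restrictImage hx).2.2, subset_rfl⟩
  obtain ⟨-, y, hy⟩ := Finset.mem_filter.1 hs
  exact ⟨y, hxs.trans hy, hdim.trans_le (Nat.sub_le_sub_right (Finset.card_le_card hy) 1)⟩

def IsEpsEmbedding [TopologicalSpace X] (d : X → X → ℝ) (ε : ℝ) (P : FinSC)
    (f : X → Fin P.k → ℝ) : Prop :=
  Continuous f ∧ (∀ x, f x ∈ P.space) ∧ ∀ p, sdiam d (f ⁻¹' {p}) < ε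

theorem IsEpsEmbedding.exists_locdim_le [PseudoMetricSpace X] [CompactSpace X] {ε : ℝ}
    {f : X → Fin P.k → ℝ} (hf : P.IsEpsEmbedding dist ε f) :
    ∃ (Q : FinSC) (g : X → Fin Q.k → ℝ), Q.IsEpsEmbedding dist ε g ∧
      ∀ x, ∃ y, dist x y < ε ∧ Q.locdim (g x) ≤ P.locdim' (f y) := by
  obtain ⟨hfc, hmem, hfib⟩ := hf
  obtain ⟨δ, hδ, hclose⟩ := hfc.exists_pos_forall_dist_lt fun x y hxy =>
    (dist_le_sdiam (A := f ⁻¹' {f x}) rfl hxy.symm).trans_lt (hfib _)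
  obtain ⟨C, h, v, ⟨hhc, hh⟩, hmesh⟩ := P.exists_isRefinement_dist_lt hδ
  have hg : ∀ x, h (f x) ∈ C.space := fun x => (hh _ (hmem x)).1
  have hgf : ∀ x, ∑ j, h (f x) j • v j = f x := fun x => (hh _ (hmem x)).2.1
  refine ⟨C.restrictImage (h ∘ f), h ∘ f,
    ⟨hhc.comp hfc, fun x => mem_space_restrictImage (hg x), fun q => ?_⟩, fun x => ?_⟩
  · refine (sdiam_mono fun x (hx : h (f x) = q) => ?_).trans_lt (hfib (∑ j, q j • v j))
    rw [Set.mem_preimage, Set.mem_singleton_iff, ← hgf x, hx]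
    rfl
  · obtain ⟨y, hxy, hdim⟩ := exists_locdim_restrictImage_le (g := h ∘ f) (hg x)
    refine ⟨y, hclose x y ?_, hdim.trans ?_⟩
    · rw [← hgf x, ← hgf y]
      exact dist_sum_smul_lt hmesh (hg x) (hg y) hxy
    · rw [locdim'_eq (hmem y).2.2]
      exact Nat.sub_le_sub_right (hh _ (hmem y)).2.2 1

end FinSC

section SupInf

variable {X : Type*} {d : X → X → ℝ} {φ : X → ℝ} {ε : ℝ}

lemma sInf_le_sInf_add {A B : Set ℝ} {c : ℝ} (hc : 0 ≤ c) (hA : BddBelow A)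
    (hAB : A.Nonempty → B.Nonempty) (h : ∀ b ∈ B, ∃ a ∈ A, a ≤ b + c) :
    sInf A ≤ sInf B + c := by
  rcases B.eq_empty_or_nonempty with rfl | hB
  · rw [Set.not_nonempty_iff_eq_empty.1 (mt hAB Set.not_nonempty_empty), Real.sInf_empty,
      zero_add]
    exact hc
  · rw [← sub_le_iff_le_add]
    refine le_csInf hB fun b hb => ?_
    obtain ⟨a, ha, hab⟩ := h b hb
    linarith [csInf_le hA ha]

lemma bddAbove_range_natCast_add {n : X → ℕ} {K : ℕ} (hn : ∀ x, n x ≤ K)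
    (hφ : BddAbove (Set.range φ)) : BddAbove (Set.range fun x => (n x : ℝ) + φ x) := by
  obtain ⟨M, hM⟩ := hφ
  exact ⟨K + M, by rintro _ ⟨x, rfl⟩; exact add_le_add (by exact_mod_cast hn x) (hM ⟨x, rfl⟩)⟩

lemma varPot_nonneg : 0 ≤ varPot d φ ε :=
  Real.sSup_nonneg (by rintro _ ⟨x, y, -, rfl⟩; exact abs_nonneg _)

lemma iSup_add_le_iSup_add_varPot (hφ : BddBelow (Set.range φ)) (hφ' : BddAbove (Set.range φ))
    {a b : X → ℝ} (hb : BddAbove (Set.range fun y => b y + φ y))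
    (h : ∀ x, ∃ y, d x y < ε ∧ a x ≤ b y) :
    ⨆ x, a x + φ x ≤ (⨆ y, b y + φ y) + varPot d φ ε := by
  rcases isEmpty_or_nonempty X with hX | hX
  · simpa using varPot_nonneg
  obtain ⟨m, hm⟩ := hφ
  obtain ⟨M, hM⟩ := hφ'
  have hvar : BddAbove {r | ∃ x y, d x y < ε ∧ r = |φ x - φ y|} := by
    refine ⟨M - m, ?_⟩
    rintro _ ⟨x, y, -, rfl⟩
    exact abs_sub_le_iff.2 ⟨by linarith [hM ⟨x, rfl⟩, hm ⟨y, rfl⟩],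
      by linarith [hM ⟨y, rfl⟩, hm ⟨x, rfl⟩]⟩
  refine ciSup_le fun x => ?_
  obtain ⟨y, hxy, hab⟩ := h x
  have hy : b y + φ y ≤ ⨆ y, b y + φ y := le_ciSup hb y
  have hvxy : |φ x - φ y| ≤ varPot d φ ε := le_csSup hvar ⟨x, y, hxy, rfl⟩
  linarith [le_abs_self (φ x - φ y)]

end SupInf

noncomputable def widimSet (X : Type*) [TopologicalSpace X] (d : X → X → ℝ) (φ : X → ℝ) (ε : ℝ)
    (dim : (P : FinSC) → (Fin P.k → ℝ) → ℕ) : Set ℝ :=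
  {r | ∃ (P : FinSC) (f : X → Fin P.k → ℝ), P.IsEpsEmbedding d ε f ∧
    r = ⨆ x, (dim P (f x) : ℝ) + φ x}

section WidthDimension

variable {X : Type*} [TopologicalSpace X] {d : X → X → ℝ} {φ : X → ℝ} {ε : ℝ}

lemma widimPot_eq : widimPot X d φ ε = sInf (widimSet X d φ ε FinSC.locdim) := by
  simp only [widimPot, widimSet, FinSC.IsEpsEmbedding, and_assoc]
  rfl

lemma widimPot'_eq : widimPot' X d φ ε = sInf (widimSet X d φ ε FinSC.locdim') := by
  simp only [widimPot', widimSet, FinSC.IsEpsEmbedding, and_assoc]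
  rfl

lemma sInf_widimSet_le_add {dim dim' : (P : FinSC) → (Fin P.k → ℝ) → ℕ} {c : ℝ} (hc : 0 ≤ c)
    (hbdd : BddBelow (widimSet X d φ ε dim))
    (h : ∀ (P : FinSC) (f : X → Fin P.k → ℝ), P.IsEpsEmbedding d ε f →
      ∃ (Q : FinSC) (g : X → Fin Q.k → ℝ), Q.IsEpsEmbedding d ε g ∧
        ⨆ x, (dim Q (g x) : ℝ) + φ x ≤ (⨆ x, (dim' P (f x) : ℝ) + φ x) + c) :
    sInf (widimSet X d φ ε dim) ≤ sInf (widimSet X d φ ε dim') + c := by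
  refine sInf_le_sInf_add hc hbdd (fun ⟨_, P, f, hf, _⟩ => ⟨_, P, f, hf, rfl⟩) ?_
  rintro _ ⟨P, f, hf, rfl⟩
  obtain ⟨Q, g, hg, hle⟩ := h P f hf
  exact ⟨_, ⟨Q, g, hg, rfl⟩, hle⟩

lemma bddBelow_widimSet {dim : (P : FinSC) → (Fin P.k → ℝ) → ℕ}
    (hdim : ∀ P w, dim P w ≤ P.k) (hφ : BddBelow (Set.range φ)) (hφ' : BddAbove (Set.range φ)) :
    BddBelow (widimSet X d φ ε dim) := by
  obtain ⟨m, hm⟩ := hφ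
  refine ⟨min 0 m, ?_⟩
  rintro _ ⟨P, f, -, rfl⟩
  rcases isEmpty_or_nonempty X with hX | ⟨⟨x⟩⟩
  · simp
  · calc min 0 m ≤ (dim P (f x) : ℝ) + φ x :=
          (min_le_right 0 m).trans (le_add_of_nonneg_of_le (Nat.cast_nonneg _) (hm ⟨x, rfl⟩))
      _ ≤ ⨆ x, (dim P (f x) : ℝ) + φ x :=
          le_ciSup (bddAbove_range_natCast_add (fun x => hdim P (f x)) hφ') x

end WidthDimension

theorem stmt8_general (X : Type*) [MetricSpace X] [CompactSpace X]
    (φ : X → ℝ) (hφ : Continuous φ) (ε : ℝ) :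
    widimPot' X dist φ ε ≤ widimPot X dist φ ε ∧
    widimPot X dist φ ε ≤ widimPot' X dist φ ε + varPot dist φ ε := by
  have hlo := (isCompact_range hφ).bddBelow
  have hhi := (isCompact_range hφ).bddAbove
  rw [widimPot_eq, widimPot'_eq]
  constructor
  · rw [← add_zero (sInf (widimSet X dist φ ε FinSC.locdim))]
    refine sInf_widimSet_le_add le_rfl (bddBelow_widimSet FinSC.locdim'_le hlo hhi)
      fun P f hf => ⟨P, f, hf, ?_⟩
    rw [add_zero]
    exact ciSup_mono (bddAbove_range_natCast_add (fun x => P.locdim_le (f x)) hhi) fun x =>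
      add_le_add_left (by exact_mod_cast FinSC.locdim'_le_locdim (hf.2.1 x).2.2) _
  · refine sInf_widimSet_le_add varPot_nonneg (bddBelow_widimSet FinSC.locdim_le hlo hhi)
      fun P f hf => ?_
    obtain ⟨Q, g, hg, hclose⟩ := hf.exists_locdim_le
    refine ⟨Q, g, hg, iSup_add_le_iSup_add_varPot hlo hhi
      (bddAbove_range_natCast_add (fun y => P.locdim'_le (f y)) hhi) fun x => ?_⟩
    obtain ⟨y, hxy, hle⟩ := hclose x
    exact ⟨y, hxy, by exact_mod_cast hle⟩

/-- For a compact metric space `(X,d)`, continuous `φ` and `ε > 0`: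
`widim'_ε(X,d,φ) ≤ widim_ε(X,d,φ) ≤ widim'_ε(X,d,φ) + var_ε(φ,d)`. -/
theorem stmt8 (X : Type*) [MetricSpace X] [CompactSpace X]
    (φ : X → ℝ) (hφ : Continuous φ) (ε : ℝ) (hε : 0 < ε) :
    widimPot' X dist φ ε ≤ widimPot X dist φ ε ∧
    widimPot X dist φ ε ≤ widimPot' X dist φ ε + varPot dist φ ε :=
  stmt8_general X φ hφ ε
end
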